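/- arXiv:1704.05616 — 2 statements merged into one kernel-verified Lean document; each statement's English description precedes it below -/
import Mathlib

section
/- A T-invariant Borel probability measure μ is tangent to the functional Q at φ ∈ C(X) (i.e., ∫ψ dμ ≤ Q(φ+ψ) − Q(φ) for all ψ ∈ C(X)) if and only if μ is a φ-maximizing measure, i.e., ∫φ dμ = Q(φ). -/
open MeasureTheory Set Topology

variable {X : Type*} [MetricSpace X] [CompactSpace X] [MeasurableSpace X] [BorelSpace X]

/-- The set of `T`-invariant Borel probability measures on `X`. -/
noncomputable def invSet (T : X → X) : Set (ProbabilityMeasure X) :=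
  {μ | (μ : Measure X).map T = (μ : Measure X)}

/-- `Q φ = max_{μ ∈ M(X,T)} ∫ φ dμ` (as a supremum). -/
noncomputable def QFun (T : X → X) (φ : C(X, ℝ)) : ℝ :=
  sSup ((fun μ : ProbabilityMeasure X => ∫ x, φ x ∂(μ : Measure X)) '' invSet T)

/-- The set of `φ`-maximizing measures. -/
noncomputable def maxSet (T : X → X) (φ : C(X, ℝ)) : Set (ProbabilityMeasure X) :=
  {μ | μ ∈ invSet T ∧ ∫ x, φ x ∂(μ : Measure X) = QFun T φ}

/-- The set of ergodic `T`-invariant Borel probability measures. -/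
def ergSet (T : X → X) : Set (ProbabilityMeasure X) :=
  {μ | Ergodic T (μ : Measure X)}

/-- Support of a measure: the intersection of all closed sets of full measure. -/
noncomputable def msupport {Y : Type*} [TopologicalSpace Y] [MeasurableSpace Y]
    (α : Measure Y) : Set Y :=
  ⋂₀ {C | IsClosed C ∧ α C = 1}

/-- `S` is arcwise-connected: any two points are joined by a homeomorphism-onto-image
path inside `S`. -/
def ArcConnIn {A : Type*} [TopologicalSpace A] (S : Set A) : Prop :=
  ∀ μ ∈ S, ∀ ν ∈ S, ∃ f : unitInterval → A,
    Topology.IsEmbedding f ∧ Set.range f ⊆ S ∧ f 0 = μ ∧ f 1 = ν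

/-! Testing tangency at `ψ = -φ` and using `Q 0 = 0` gives `Q φ ≤ ∫ φ dμ`. Conversely, if `μ` is
`φ`-maximizing then `∫ ψ dμ = ∫ (φ + ψ) dμ - Q φ ≤ Q (φ + ψ) - Q φ`. -/

section

variable {Y : Type*} [MetricSpace Y] [MeasurableSpace Y]

lemma bddAbove_integral_image [CompactSpace Y] (S : Set (ProbabilityMeasure Y)) (f : C(Y, ℝ)) :
    BddAbove ((fun μ : ProbabilityMeasure Y => ∫ y, f y ∂(μ : Measure Y)) '' S) := by
  refine ⟨‖f‖, ?_⟩
  rintro _ ⟨μ, -, rfl⟩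
  calc ∫ y, f y ∂(μ : Measure Y)
      ≤ ‖∫ y, f y ∂(μ : Measure Y)‖ := le_abs_self _
    _ ≤ ‖f‖ * (μ : Measure Y).real univ :=
        norm_integral_le_of_norm_le_const (.of_forall f.norm_coe_le_norm)
    _ = ‖f‖ := by simp

lemma integral_le_QFun [CompactSpace Y] {T : Y → Y} {μ : ProbabilityMeasure Y}
    (hμ : μ ∈ invSet T) (f : C(Y, ℝ)) : ∫ y, f y ∂(μ : Measure Y) ≤ QFun T f :=
  le_csSup (bddAbove_integral_image _ f) ⟨μ, hμ, rfl⟩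

lemma QFun_zero {T : Y → Y} (hne : (invSet T).Nonempty) : QFun T 0 = 0 := by
  simp [QFun, hne.image_const]

lemma integral_continuousMap_add [CompactSpace Y] [OpensMeasurableSpace Y] (μ : Measure Y)
    [IsFiniteMeasure μ] (f g : C(Y, ℝ)) :
    ∫ y, (f + g) y ∂μ = ∫ y, f y ∂μ + ∫ y, g y ∂μ :=
  integral_add (f.continuous.integrable_of_hasCompactSupport (.of_compactSpace _))
    (g.continuous.integrable_of_hasCompactSupport (.of_compactSpace _))

end

theorem stmt1_general (T : X → X) (μ : ProbabilityMeasure X) (hμ : μ ∈ invSet T) (φ : C(X, ℝ)) :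
    (∀ ψ : C(X, ℝ), ∫ x, ψ x ∂(μ : Measure X) ≤ QFun T (φ + ψ) - QFun T φ) ↔
      ∫ x, φ x ∂(μ : Measure X) = QFun T φ := by
  constructor
  · intro htangent
    have h := htangent (-φ)
    rw [add_neg_cancel, QFun_zero ⟨μ, hμ⟩] at h
    simp only [ContinuousMap.neg_apply, integral_neg] at h
    linarith [integral_le_QFun hμ φ]
  · intro hmax ψ
    linarith [integral_le_QFun hμ (φ + ψ), integral_continuousMap_add (μ : Measure X) φ ψ]

/-- An invariant measure `μ` is tangent to `Q` at `φ` iff `μ` is `φ`-maximizing. -/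
theorem stmt1 (T : X → X) (hT : Continuous T) (hne : (invSet T).Nonempty)
    (μ : ProbabilityMeasure X) (hμ : μ ∈ invSet T) (φ : C(X, ℝ)) :
    (∀ ψ : C(X, ℝ), ∫ x, ψ x ∂(μ : Measure X) ≤ QFun T (φ + ψ) - QFun T φ) ↔
      ∫ x, φ x ∂(μ : Measure X) = QFun T φ :=
  stmt1_general T μ hμ φ
end

section
/- (Bishop–Phelps) Let Γ : V → ℝ be a convex continuous functional on a Banach space V. For every bounded linear functional F₀ bounded by Γ (i.e., F₀(ψ) ≤ Γ(ψ) for all ψ), every φ₀ ∈ V, and every ε > 0, there exist a bounded linear functional F and φ ∈ V such that F is tangent to Γ at φ, ‖F₀ − F‖ ≤ ε, and ‖φ₀ − φ‖ ≤ (1/ε)(Γ(φ₀) − F₀(φ₀) + s(F₀)), where s(F₀) = sup{F₀(ψ) − Γ(ψ) : ψ ∈ V}. -/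
/-!
Ekeland's variational principle, applied to the continuous function `Γ - F₀` (bounded below by
`-s(F₀)`), gives a point `φ` with `ε ‖φ₀ - φ‖ ≤ (Γ - F₀)(φ₀) - (Γ - F₀)(φ)` at which
`Γ - F₀ + ε ‖· - φ‖` is minimal. The convex function `ψ ↦ (Γ - F₀)(φ + ψ) - (Γ - F₀)(φ)` then
dominates `-ε ‖ψ‖`, and a Hahn–Banach separation of its strict epigraph from the hypograph of
`-ε ‖·‖` produces a functional `L` with `‖L‖ ≤ ε` lying below it; `F = F₀ + L` is tangent at `φ`.
-/

open Set Filter Topology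

theorem cauchySeq_of_dist_le_sub {X : Type*} [PseudoMetricSpace X] {x : ℕ → X} {u : ℕ → ℝ}
    (hu : BddBelow (range u)) (h : ∀ n m, n ≤ m → dist (x m) (x n) ≤ u n - u m) :
    CauchySeq x := by
  have hanti : Antitone u := fun n m hnm => sub_nonneg.1 (dist_nonneg.trans (h n m hnm))
  have hlim := tendsto_atTop_ciInf hanti hu
  refine cauchySeq_of_le_tendsto_0 (fun N => u N - ⨅ n, u n) (fun n m N hn hm => ?_) ?_
  · have key : ∀ n m, N ≤ n → n ≤ m → dist (x n) (x m) ≤ u N - ⨅ n, u n := fun n m hn hnm => by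
      rw [dist_comm]
      linarith [h n m hnm, hanti hn, ciInf_le hu m]
    rcases le_total n m with hnm | hmn
    · exact key n m hn hnm
    · exact dist_comm (x n) (x m) ▸ key m n hm hmn
  · simpa using hlim.sub_const (⨅ n, u n)

lemma exists_mem_forall_le_add {α : Type*} {g : α → ℝ} {S : Set α} (hS : S.Nonempty)
    (hb : BddBelow (g '' S)) {δ : ℝ} (hδ : 0 < δ) : ∃ x ∈ S, ∀ y ∈ S, g x ≤ g y + δ := by
  obtain ⟨_, ⟨x, hx, rfl⟩, hlt⟩ := exists_lt_of_csInf_lt (hS.image g) (lt_add_of_pos_right _ hδ)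
  exact ⟨x, hx, fun y hy => by linarith [csInf_le hb (mem_image_of_mem g hy)]⟩

section Ekeland

variable {X : Type*} [PseudoMetricSpace X] {g : X → ℝ} {ε : ℝ}

lemma add_mul_dist_le_trans (hε : 0 ≤ ε) {x y z : X} (hxy : g y + ε * dist y x ≤ g x)
    (hyz : g z + ε * dist z y ≤ g y) : g z + ε * dist z x ≤ g x := by
  nlinarith [dist_triangle z y x]

theorem ekeland_variational_principle [CompleteSpace X] (hg : LowerSemicontinuous g)
    (hgb : BddBelow (range g)) (hε : 0 < ε) (x₀ : X) :
    ∃ x, g x + ε * dist x x₀ ≤ g x₀ ∧ ∀ y, g x ≤ g y + ε * dist x y := by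
  choose next hnext_le hnext_inf using fun (n : ℕ) (x : X) =>
    exists_mem_forall_le_add (S := {y | g y + ε * dist y x ≤ g x}) ⟨x, by simp⟩
      (hgb.mono (image_subset_range _ _)) (Nat.one_div_pos_of_nat (n := n))
  -- `x (n + 1)` minimises `g` up to `1 / (n + 1)` among the points dominated by `x n`
  let x : ℕ → X := fun n => Nat.rec x₀ next n
  have hchain : ∀ n m, n ≤ m → g (x m) + ε * dist (x m) (x n) ≤ g (x n) := fun n m =>
    Nat.le_induction (by simp) (fun m _ ih => add_mul_dist_le_trans hε.le ih (hnext_le m (x m))) m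
  have hcauchy : CauchySeq x := by
    refine cauchySeq_of_dist_le_sub (u := fun n => g (x n) / ε) ?_ fun n m hnm => ?_
    · obtain ⟨c, hc⟩ := hgb
      exact ⟨c / ε, by rintro _ ⟨n, rfl⟩; exact div_le_div_of_nonneg_right (hc ⟨_, rfl⟩) hε.le⟩
    · rw [← sub_div, le_div_iff₀ hε]
      linarith [hchain n m hnm]
  obtain ⟨z, hz⟩ := cauchySeq_tendsto_of_complete hcauchy
  have hzchain : ∀ n, g z + ε * dist z (x n) ≤ g (x n) := fun n =>
    ((hg.add (continuous_const.mul (continuous_id.dist continuous_const)).lowerSemicontinuous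
      ).isClosed_preimage (g (x n))).mem_of_tendsto hz (eventually_atTop.2 ⟨n, hchain n⟩)
  refine ⟨z, hzchain 0, fun y => ?_⟩
  by_contra! hy
  have hy_dom : ∀ n, g y + ε * dist y (x n) ≤ g (x n) := fun n =>
    add_mul_dist_le_trans hε.le (hzchain n) (by rw [dist_comm]; exact hy.le)
  have : g z ≤ g y := le_of_forall_pos_lt_add fun δ hδ => by
    obtain ⟨n, hn⟩ := exists_nat_one_div_lt hδ
    calc g z ≤ g (x (n + 1)) := by
          nlinarith [hzchain (n + 1), dist_nonneg (x := z) (y := x (n + 1))]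
      _ ≤ g y + 1 / (n + 1) := hnext_inf n (x n) y (hy_dom n)
      _ < g y + δ := by linarith
  nlinarith [dist_nonneg (x := z) (y := y)]

end Ekeland

theorem ConvexOn.exists_dual_le_of_neg_mul_norm_le {V : Type*} [NormedAddCommGroup V]
    [NormedSpace ℝ V] {q : V → ℝ} (hq : ConvexOn ℝ univ q) (hqc : Continuous q) (hq0 : q 0 = 0)
    {ε : ℝ} (hε : 0 ≤ ε) (hlb : ∀ v, -(ε * ‖v‖) ≤ q v) :
    ∃ L : V →L[ℝ] ℝ, ‖L‖ ≤ ε ∧ ∀ v, L v ≤ q v := by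
  let A : Set (V × ℝ) := {p | p.1 ∈ univ ∧ q p.1 < p.2}
  let B : Set (V × ℝ) := {p | p.1 ∈ univ ∧ p.2 ≤ -(ε • ‖p.1‖)}
  have hAB : Disjoint A B := by
    rw [Set.disjoint_left]
    rintro ⟨v, t⟩ ⟨-, hA⟩ ⟨-, hB⟩
    linarith [hlb v, smul_eq_mul ε ‖v‖]
  have hAo : IsOpen A := by
    simpa [A] using isOpen_lt (hqc.comp continuous_fst) continuous_snd
  obtain ⟨f, u, hfA, hfB⟩ := geometric_hahn_banach_open hq.convex_strict_epigraph hAo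
    ((convexOn_norm convex_univ).smul hε).neg.convex_hypograph hAB
  set L := f.comp (.inl ℝ V ℝ)
  set c := f (0, 1)
  have hf : ∀ v t, f (v, t) = L v + t * c := fun v t => by
    rw [← smul_eq_mul, ← map_smul, ContinuousLinearMap.comp_apply, ← map_add,
      ContinuousLinearMap.inl_apply, Prod.smul_mk, smul_zero, smul_eq_mul, mul_one,
      Prod.mk_add_mk, add_zero, zero_add]
  have hu : u ≤ 0 := by simpa [hf] using hfB (0, 0) (by simp)
  have hc : c < 0 := by
    have := hfA (0, 1) (by simp [hq0])
    simp only [hf, map_zero, one_mul, zero_add] at this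
    linarith
  have hu' : 0 ≤ u := by
    by_contra! h
    have := hfA (0, u / c) ⟨trivial, by simpa [hq0] using div_pos_of_neg_of_neg h hc⟩
    rw [hf, map_zero, zero_add, div_mul_cancel₀ _ hc.ne] at this
    exact this.false
  -- `(0, t) ∈ A` for `t > 0` and `(0, 0) ∈ B` force `c < 0` and `u = 0`; normalise by `-c`
  set G := (-c)⁻¹ • L
  have hfG : ∀ v t, f (v, t) = -c * (G v - t) := fun v t => by
    simp only [hf, G, FunLike.coe_smul, Pi.smul_apply, smul_eq_mul]
    field_simp [hc.ne]
    ring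
  have hGq : ∀ v, G v ≤ q v := fun v => by
    refine le_of_forall_gt_imp_ge_of_dense fun t ht => ?_
    have := hfA (v, t) ⟨trivial, ht⟩
    rw [hfG] at this
    nlinarith
  have hGnorm : ∀ v, -(ε * ‖v‖) ≤ G v := fun v => by
    have := hfB (v, -(ε * ‖v‖)) ⟨trivial, le_rfl⟩
    rw [hfG] at this
    nlinarith
  refine ⟨G, ContinuousLinearMap.opNorm_le_bound _ hε fun v => ?_, hGq⟩
  rw [Real.norm_eq_abs, abs_le]
  refine ⟨hGnorm v, ?_⟩
  simpa using hGnorm (-v)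

theorem ConvexOn.exists_dual_le_sub_of_forall_le_add_mul_norm {V : Type*} [NormedAddCommGroup V]
    [NormedSpace ℝ V] {g : V → ℝ} (hg : ConvexOn ℝ univ g) (hgc : Continuous g) {ε : ℝ}
    (hε : 0 ≤ ε) {φ : V} (hφ : ∀ v, g φ ≤ g (φ + v) + ε * ‖v‖) :
    ∃ L : V →L[ℝ] ℝ, ‖L‖ ≤ ε ∧ ∀ v, L v ≤ g (φ + v) - g φ := by
  have hq : ConvexOn ℝ univ fun v => g (φ + v) - g φ := by
    simpa only [preimage_univ, sub_eq_add_neg, Function.comp_def, Pi.add_def]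
      using (hg.translate_right φ).add_const (-g φ)
  exact hq.exists_dual_le_of_neg_mul_norm_le (by fun_prop) (by simp) hε
    fun v => by linarith [hφ v]

/-- The Bishop–Phelps theorem: a `Γ`-bounded functional can be approximated by a
`Γ`-tangent one, with quantitative control on the base point. -/
theorem stmt3 {V : Type*} [NormedAddCommGroup V] [NormedSpace ℝ V] [CompleteSpace V]
    (Γ : V → ℝ) (hconv : ConvexOn ℝ Set.univ Γ) (hcont : Continuous Γ)
    (F₀ : V →L[ℝ] ℝ) (hbdd : ∀ ψ : V, F₀ ψ ≤ Γ ψ) (φ₀ : V) (ε : ℝ) (hε : 0 < ε) :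
    ∃ (F : V →L[ℝ] ℝ) (φ : V),
      (∀ ψ : V, F ψ ≤ Γ (φ + ψ) - Γ φ) ∧ ‖F₀ - F‖ ≤ ε ∧
      ‖φ₀ - φ‖ ≤ (1 / ε) * (Γ φ₀ - F₀ φ₀ + sSup (Set.range fun ψ : V => F₀ ψ - Γ ψ)) := by
  set s := sSup (range fun ψ : V => F₀ ψ - Γ ψ)
  have hs : ∀ v, -s ≤ Γ v - F₀ v := fun v => by
    have hsup : BddAbove (range fun ψ : V => F₀ ψ - Γ ψ) :=
      ⟨0, by rintro _ ⟨ψ, rfl⟩; linarith [hbdd ψ]⟩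
    linarith [le_csSup hsup ⟨v, rfl⟩]
  have hgc : Continuous fun v => Γ v - F₀ v := hcont.sub F₀.continuous
  have hgconv : ConvexOn ℝ univ fun v => Γ v - F₀ v :=
    hconv.sub (F₀.toLinearMap.concaveOn convex_univ)
  obtain ⟨φ, hφ₀, hφ⟩ := ekeland_variational_principle hgc.lowerSemicontinuous
    ⟨-s, by rintro _ ⟨v, rfl⟩; exact hs v⟩ hε φ₀
  obtain ⟨L, hL, hLg⟩ := hgconv.exists_dual_le_sub_of_forall_le_add_mul_norm hgc hε.le
    fun v => by simpa using hφ (φ + v)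
  refine ⟨F₀ + L, φ, fun ψ => ?_, by simpa using hL, ?_⟩
  · rw [add_apply]
    linarith [hLg ψ, map_add F₀ φ ψ]
  · rw [one_div_mul_eq_div, le_div_iff₀ hε, ← dist_eq_norm', mul_comm]
    linarith [hs φ]
end
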